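/- arXiv:2106.13481 — 2 statements merged into one kernel-verified Lean document; each statement's English description precedes it below -/
import Mathlib

section
/- Let λ > 0, α > 0 with λα < 1, and let X ∼ Poi_λ(α) be the degenerate Poisson random variable with parameter α. Then for every integer n ≥ 0, E[ C(X+n−1, n) ] = B^L_{n,λ}(α) / n!, where C(·,·) denotes the binomial coefficient and B^L_{n,λ} is the degenerate Lah-Bell polynomial. -/
/-- The lambda-falling factorial `(x)_{n,lam}`. -/
noncomputable def dffac (lam x : ℝ) (n : ℕ) : ℝ := ∏ i ∈ Finset.range n, (x - i * lam)

/-- The ordinary falling factorial `(x)_n`. -/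
noncomputable def ffac (x : ℝ) (n : ℕ) : ℝ := ∏ i ∈ Finset.range n, (x - i)

/-- The rising factorial. -/
noncomputable def rfac (x : ℝ) (n : ℕ) : ℝ := ∏ i ∈ Finset.range n, (x + i)

/-- Expectation of `f(X)` for the degenerate Poisson random variable `X ~ Poi_lam(a)`. -/
noncomputable def degPoiE (lam a : ℝ) (f : ℕ → ℝ) : ℝ :=
  (1 + lam * a) ^ (-(1 / lam)) * ∑' i : ℕ, f i * dffac lam 1 i * a ^ i / (i.factorial : ℝ)

/-- The degenerate Lah-Bell polynomial: n! times the n-th Taylor coefficient at t = 0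
of the function t => (1+lam*x)^(-1/lam) * (1 + lam*x/(1-t))^(1/lam). -/
noncomputable def lahBell (lam x : ℝ) (n : ℕ) : ℝ :=
  iteratedDeriv n
    (fun t : ℝ => (1 + lam * x) ^ (-(1 / lam)) * (1 + lam * x / (1 - t)) ^ (1 / lam)) 0

open Filter Finset

lemma ffac_succ (r : ℝ) (n : ℕ) : ffac r (n + 1) = ffac r n * (r - n) := by
  rw [ffac, ffac, Finset.prod_range_succ]

lemma summ_aux (r : ℝ) {q : ℝ} (hq0 : 0 ≤ q) (hq : q < 1) :
    Summable (fun n : ℕ => |ffac r n| / n.factorial * (n + 1) * q ^ n) := by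
  set l : ℝ := (1 + q) / 2 with hl
  have hql : q < l := by rw [hl]; linarith
  have hl1 : l < 1 := by rw [hl]; linarith
  have hl0 : 0 < l := by rw [hl]; linarith
  apply summable_of_ratio_norm_eventually_le hl1
  obtain ⟨N, hN⟩ := exists_nat_ge ((q * (|r| + 2) + 2 * |r| * q) / (l - q))
  rw [eventually_atTop]
  refine ⟨max N 1, fun n hn => ?_⟩
  have hn1 : (1 : ℝ) ≤ n := by
    have := le_of_max_le_right hn; exact_mod_cast this
  have hnN : ((q * (|r| + 2) + 2 * |r| * q) / (l - q)) ≤ n := by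
    have := le_of_max_le_left hn
    exact hN.trans (by exact_mod_cast this)
  have hnM : q * (|r| + 2) + 2 * |r| * q ≤ (l - q) * n := by
    rw [div_le_iff₀ (by linarith)] at hnN; linarith [hnN]
  have key : |r - (n : ℝ)| * ((n : ℝ) + 2) * q ≤ l * ((n : ℝ) + 1) ^ 2 := by
    have h1 : |r - (n : ℝ)| ≤ |r| + n := by
      rw [sub_eq_add_neg]
      refine (abs_add_le _ _).trans ?_
      rw [abs_neg, Nat.abs_cast]
    have h2 : 0 ≤ ((n : ℝ) + 2) * q := by positivity
    have h3 : (|r| + n) * ((n : ℝ) + 2) * q ≤ l * ((n : ℝ) + 1) ^ 2 := by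
      nlinarith [abs_nonneg r, sq_nonneg ((n : ℝ) - 1), hn1, hnM, hq0, hql]
    calc |r - (n : ℝ)| * ((n : ℝ) + 2) * q ≤ (|r| + n) * ((n : ℝ) + 2) * q := by
          apply mul_le_mul_of_nonneg_right (mul_le_mul_of_nonneg_right h1 (by positivity)) hq0
      _ ≤ l * ((n : ℝ) + 1) ^ 2 := h3
  have hpos : (0:ℝ) < (n:ℝ) + 1 := by positivity
  have hfn : (0:ℝ) ≤ |ffac r n| / n.factorial * (n + 1) * q ^ n := by positivity
  have hfn1 : (0:ℝ) ≤ |ffac r (n+1)| / (n+1).factorial * ((n:ℝ) + 1 + 1) * q ^ (n+1) := by positivity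
  rw [Real.norm_of_nonneg (by push_cast; exact hfn1), Real.norm_of_nonneg hfn]
  have hfacts : ((n+1).factorial : ℝ) = ((n:ℝ) + 1) * n.factorial := by
    rw [Nat.factorial_succ]; push_cast; ring
  have habs : |ffac r (n+1)| = |ffac r n| * |r - n| := by rw [ffac_succ, abs_mul]
  push_cast
  rw [habs, hfacts, pow_succ]
  have hfacpos : (0:ℝ) < n.factorial := by positivity
  have e1 : |ffac r n| * |r - ↑n| / ((↑n + 1) * ↑n.factorial) * (↑n + 1 + 1) * (q ^ n * q)
      = (|ffac r n| * q ^ n / ((↑n + 1) * ↑n.factorial)) * (|r - ↑n| * (↑n + 2) * q) := by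
    field_simp; ring
  have e2 : l * (|ffac r n| / ↑n.factorial * (↑n + 1) * q ^ n)
      = (|ffac r n| * q ^ n / ((↑n + 1) * ↑n.factorial)) * (l * (↑n + 1) ^ 2) := by
    field_simp
  rw [e1, e2]
  exact mul_le_mul_of_nonneg_left key (by positivity)

lemma summ_bound (r : ℝ) {q : ℝ} (hq0 : 0 ≤ q) (hq : q < 1) :
    Summable (fun n : ℕ => |ffac r n| / n.factorial * q ^ n) := by
  apply (summ_aux r hq0 hq).of_nonneg_of_le (fun n => by positivity)
  intro n
  have h1 : (1:ℝ) ≤ (n:ℝ) + 1 := by linarith [Nat.cast_nonneg (α := ℝ) n]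
  calc |ffac r n| / n.factorial * q ^ n = |ffac r n| / n.factorial * 1 * q ^ n := by ring
    _ ≤ |ffac r n| / n.factorial * ((n:ℝ)+1) * q ^ n := by
        apply mul_le_mul_of_nonneg_right (mul_le_mul_of_nonneg_left h1 (by positivity)) (by positivity)

lemma term_summable (r : ℝ) {w : ℝ} (hw : |w| < 1) :
    Summable (fun n : ℕ => ffac r n / n.factorial * w ^ n) := by
  apply Summable.of_abs
  apply (summ_bound r (abs_nonneg w) hw).of_nonneg_of_le (fun n => abs_nonneg _)
  intro n
  rw [abs_mul, abs_div, abs_pow, Nat.abs_cast]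

theorem hasSum_binomial (r : ℝ) {z : ℝ} (hz : |z| < 1) :
    HasSum (fun n : ℕ => ffac r n / n.factorial * z ^ n) ((1 + z) ^ r) := by
  set F : ℝ → ℝ := fun w => ∑' n : ℕ, ffac r n / n.factorial * w ^ n with hF
  -- derivative of F
  have hderiv : ∀ w : ℝ, |w| < 1 →
      HasDerivAt F (∑' n : ℕ, ffac r (n + 1) / n.factorial * w ^ n) w := by
    intro w hw
    set q : ℝ := (1 + |w|) / 2 with hqdef
    have hq0 : 0 < q := by rw [hqdef]; positivity
    have hq1 : q < 1 := by rw [hqdef]; linarith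
    have hwq : |w| < q := by rw [hqdef]; linarith [abs_nonneg w]
    have hu : Summable (fun n : ℕ => |ffac r n| / n.factorial * (n + 1) * q ^ n * q⁻¹) :=
      (summ_aux r hq0.le hq1).mul_right _
    have hbound : ∀ n : ℕ, ∀ y ∈ Set.Ioo (-q) q,
        ‖ffac r n / n.factorial * ((n : ℝ) * y ^ (n - 1))‖ ≤
          |ffac r n| / n.factorial * (n + 1) * q ^ n * q⁻¹ := by
      intro n y hy
      have hyq : |y| ≤ q := (abs_lt.2 ⟨hy.1, hy.2⟩).le
      rw [Real.norm_eq_abs, abs_mul, abs_mul, abs_div, Nat.abs_cast, Nat.abs_cast, abs_pow]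
      have hcore : (n : ℝ) * |y| ^ (n - 1) ≤ ((n : ℝ) + 1) * q ^ n * q⁻¹ := by
        cases n with
        | zero => simp; positivity
        | succ m =>
          have h1 : |y| ^ m ≤ q ^ m := pow_le_pow_left₀ (abs_nonneg y) hyq m
          have h2 : q ^ (m + 1) * q⁻¹ = q ^ m := by
            rw [pow_succ, mul_assoc, mul_inv_cancel₀ hq0.ne', mul_one]
          rw [Nat.succ_sub_one, mul_assoc, h2]
          push_cast
          have : ((m : ℝ) + 1) * |y| ^ m ≤ ((m : ℝ) + 1) * q ^ m := by
            apply mul_le_mul_of_nonneg_left h1 (by positivity)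
          refine this.trans ?_
          apply mul_le_mul_of_nonneg_right (by linarith) (by positivity)
      calc |ffac r n| / n.factorial * ((n : ℝ) * |y| ^ (n - 1))
          ≤ |ffac r n| / n.factorial * (((n : ℝ) + 1) * q ^ n * q⁻¹) := by
            apply mul_le_mul_of_nonneg_left hcore (by positivity)
        _ = |ffac r n| / n.factorial * (n + 1) * q ^ n * q⁻¹ := by ring
    have hgt : ∀ n : ℕ, ∀ y ∈ Set.Ioo (-q) q,
        HasDerivAt (fun y : ℝ => ffac r n / n.factorial * y ^ n)
          (ffac r n / n.factorial * ((n : ℝ) * y ^ (n - 1))) y :=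
      fun n y _ => (hasDerivAt_pow n y).const_mul _
    have hsum0 : Summable (fun n : ℕ => ffac r n / n.factorial * (0 : ℝ) ^ n) := by
      apply summable_of_ne_finset_zero (s := {0})
      intro n hn
      simp only [Finset.mem_singleton] at hn
      simp [zero_pow hn]
    have h0mem : (0 : ℝ) ∈ Set.Ioo (-q) q := Set.mem_Ioo.2 ⟨by linarith, hq0⟩
    have hwmem : w ∈ Set.Ioo (-q) q := by
      have := abs_lt.1 hwq; exact ⟨this.1, this.2⟩
    have H := hasDerivAt_tsum_of_isPreconnected hu isOpen_Ioo
      (convex_Ioo (-q) q).isPreconnected hgt hbound h0mem hsum0 hwmem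
    have hs : Summable (fun n : ℕ => ffac r n / n.factorial * ((n : ℝ) * w ^ (n - 1))) :=
      Summable.of_norm_bounded hu (fun n => hbound n w hwmem)
    have hshift : (∑' n : ℕ, ffac r n / n.factorial * ((n : ℝ) * w ^ (n - 1))) =
        ∑' n : ℕ, ffac r (n + 1) / n.factorial * w ^ n := by
      rw [Summable.tsum_eq_zero_add hs]
      simp only [Nat.cast_zero, zero_mul, mul_zero, zero_add]
      apply tsum_congr
      intro n
      have hfacne : ((n : ℝ) + 1) ≠ 0 := by positivity
      rw [Nat.factorial_succ, Nat.succ_sub_one]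
      push_cast
      field_simp
    rw [hshift] at H
    exact H
  -- the ODE
  have hODE : ∀ w : ℝ, |w| < 1 →
      (1 + w) * (∑' n : ℕ, ffac r (n + 1) / n.factorial * w ^ n) = r * F w := by
    intro w hw
    have hw0 : (0:ℝ) ≤ |w| := abs_nonneg w
    set q : ℝ := (1 + |w|) / 2 with hqdef
    have hq0 : 0 < q := by rw [hqdef]; positivity
    have hq1 : q < 1 := by rw [hqdef]; linarith
    have hwq : |w| < q := by rw [hqdef]; linarith
    have hD : Summable (fun n : ℕ => ffac r (n + 1) / n.factorial * w ^ n) := by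
      apply Summable.of_abs
      have hbase : Summable (fun n : ℕ =>
          |ffac r (n+1)| / (n+1).factorial * ((n:ℕ)+1+1 : ℝ) * q ^ (n+1) * q⁻¹) := by
        have h1 := ((summable_nat_add_iff 1).mpr (summ_aux r hq0.le hq1)).mul_right q⁻¹
        apply h1.congr
        intro n
        push_cast
        ring
      apply hbase.of_nonneg_of_le (fun n => abs_nonneg _)
      intro n
      rw [abs_mul, abs_div, abs_pow, Nat.abs_cast]
      have e1 : |ffac r (n+1)| / n.factorial = |ffac r (n+1)| / (n+1).factorial * ((n:ℝ)+1) := by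
        rw [Nat.factorial_succ]
        push_cast
        field_simp
      have e2 : q ^ (n+1) * q⁻¹ = q ^ n := by
        rw [pow_succ, mul_assoc, mul_inv_cancel₀ hq0.ne', mul_one]
      have h3 : |w| ^ n ≤ q ^ n := pow_le_pow_left₀ hw0 hwq.le n
      calc |ffac r (n+1)| / n.factorial * |w| ^ n
          ≤ |ffac r (n+1)| / n.factorial * q ^ n := by
            apply mul_le_mul_of_nonneg_left h3 (by positivity)
        _ = |ffac r (n+1)| / (n+1).factorial * ((n:ℝ)+1) * q ^ n := by rw [e1]
        _ ≤ |ffac r (n+1)| / (n+1).factorial * ((n:ℝ)+1+1) * q ^ n := by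
            apply mul_le_mul_of_nonneg_right
              (mul_le_mul_of_nonneg_left (by linarith) (by positivity))
              (pow_nonneg hq0.le n)
        _ = |ffac r (n+1)| / (n+1).factorial * ((n:ℝ)+1+1) * q ^ (n+1) * q⁻¹ := by
            rw [← e2]; ring
    have hK : Summable (fun n : ℕ => ffac r n * n / n.factorial * w ^ n) := by
      apply Summable.of_abs
      apply (summ_aux r hw0 hw).of_nonneg_of_le (fun n => abs_nonneg _)
      intro n
      rw [abs_mul, abs_div, abs_mul, abs_pow, Nat.abs_cast, Nat.abs_cast]
      have hnn : |ffac r n| * (n:ℝ) ≤ |ffac r n| * ((n:ℝ)+1) := by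
        nlinarith [abs_nonneg (ffac r n)]
      calc |ffac r n| * (n:ℝ) / n.factorial * |w| ^ n
          ≤ |ffac r n| * ((n:ℝ)+1) / n.factorial * |w| ^ n := by gcongr
        _ = |ffac r n| / n.factorial * ((n:ℝ) + 1) * |w| ^ n := by ring
    have h1 : w * (∑' n : ℕ, ffac r (n + 1) / n.factorial * w ^ n) =
        ∑' n : ℕ, ffac r (n+1) * ((n:ℝ)+1) / (n+1).factorial * w ^ (n+1) := by
      rw [← tsum_mul_left]
      apply tsum_congr
      intro n
      rw [Nat.factorial_succ]
      push_cast
      field_simp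
      ring
    have h2 : (∑' n : ℕ, ffac r (n+1) * ((n:ℝ)+1) / (n+1).factorial * w ^ (n+1)) =
        ∑' n : ℕ, ffac r n * n / n.factorial * w ^ n := by
      rw [Summable.tsum_eq_zero_add hK]
      simp only [Nat.cast_zero, mul_zero, zero_mul, zero_div, zero_add]
      apply tsum_congr
      intro n
      push_cast
      ring
    calc (1 + w) * (∑' n : ℕ, ffac r (n + 1) / n.factorial * w ^ n)
        = (∑' n : ℕ, ffac r (n + 1) / n.factorial * w ^ n) +
          w * (∑' n : ℕ, ffac r (n + 1) / n.factorial * w ^ n) := by ring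
      _ = (∑' n : ℕ, ffac r (n + 1) / n.factorial * w ^ n) +
          ∑' n : ℕ, ffac r n * n / n.factorial * w ^ n := by rw [h1, h2]
      _ = ∑' n : ℕ, (ffac r (n + 1) / n.factorial * w ^ n + ffac r n * n / n.factorial * w ^ n) := (Summable.tsum_add hD hK).symm
      _ = ∑' n : ℕ, r * (ffac r n / n.factorial * w ^ n) := by
          apply tsum_congr
          intro n
          rw [ffac_succ]
          have : ((n.factorial : ℝ)) ≠ 0 := by positivity
          field_simp
          ring
      _ = r * F w := tsum_mul_left
  -- constancy of F w * (1+w)^(-r)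
  have hPhi : ∀ w : ℝ, |w| < 1 → F w * (1 + w) ^ (-r) = 1 := by
    have hPhiDeriv : ∀ w : ℝ, |w| < 1 →
        HasDerivAt (fun w => F w * (1 + w) ^ (-r)) 0 w := by
      intro w hw
      have h1w : 0 < 1 + w := by have := abs_lt.1 hw; linarith
      have hFd := hderiv w hw
      have hpow : HasDerivAt (fun w : ℝ => (1 + w) ^ (-r)) (1 * (-r) * (1 + w) ^ (-r - 1)) w := by
        exact (HasDerivAt.rpow_const ((hasDerivAt_id w).const_add 1) (Or.inl h1w.ne'))
      have hmul := hFd.mul hpow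
      refine hmul.congr_deriv ?_
      have hsplit : (1 + w) ^ (-r) = (1 + w) ^ (-r - 1) * (1 + w) := by
        rw [← Real.rpow_add_one h1w.ne' (-r - 1)]
        congr 1
        ring
      rw [hsplit]
      have hode := hODE w hw
      linear_combination ((1 + w) ^ (-r - 1)) * hode
    intro w hw
    have hw1 : |w| < 1 := hw
    have hPhi0 : F 0 * (1 + 0 : ℝ) ^ (-r) = 1 := by
      have hF0 : F 0 = 1 := by
        show (∑' n : ℕ, ffac r n / n.factorial * (0:ℝ) ^ n) = 1
        rw [tsum_eq_single 0 (fun n hn => by simp [zero_pow hn])]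
        simp [ffac]
      rw [hF0]
      norm_num
    rcases le_total 0 w with hsgn | hsgn
    · have := constant_of_has_deriv_right_zero (f := fun w => F w * (1 + w) ^ (-r))
        (a := 0) (b := w) ?_ ?_ w (Set.right_mem_Icc.2 hsgn)
      · have h0 : F w * (1 + w) ^ (-r) = F 0 * (1 + 0 : ℝ) ^ (-r) := this
        rw [h0]; exact hPhi0
      · intro x hx
        have hx1 : |x| < 1 := by
          rw [abs_lt]; constructor <;> [linarith [hx.1]; exact lt_of_le_of_lt hx.2 (by
            have := (abs_lt.1 hw).2; linarith)]
        exact (hPhiDeriv x hx1).continuousAt.continuousWithinAt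
      · intro x hx
        have hx1 : |x| < 1 := by
          rw [abs_lt]; constructor
          · linarith [hx.1]
          · have := (abs_lt.1 hw).2; linarith [hx.2]
        exact (hPhiDeriv x hx1).hasDerivWithinAt
    · have := constant_of_has_deriv_right_zero (f := fun w => F w * (1 + w) ^ (-r))
        (a := w) (b := 0) ?_ ?_ 0 (Set.right_mem_Icc.2 hsgn)
      · have h0 : F 0 * (1 + 0 : ℝ) ^ (-r) = F w * (1 + w) ^ (-r) := this
        rw [← h0]; exact hPhi0
      · intro x hx
        have hx1 : |x| < 1 := by
          rw [abs_lt]; constructor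
          · have := (abs_lt.1 hw).1; linarith [hx.1]
          · linarith [hx.2]
        exact (hPhiDeriv x hx1).continuousAt.continuousWithinAt
      · intro x hx
        have hx1 : |x| < 1 := by
          rw [abs_lt]; constructor
          · have := (abs_lt.1 hw).1; linarith [hx.1]
          · linarith [hx.2]
        exact (hPhiDeriv x hx1).hasDerivWithinAt
  -- conclusion
  have h1z : 0 < 1 + z := by have := abs_lt.1 hz; linarith
  have hFz : F z = (1 + z) ^ r := by
    have h := hPhi z hz
    have hne : (1 + z) ^ (-r) ≠ 0 := (Real.rpow_pos_of_pos h1z _).ne'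
    have : F z = ((1 + z) ^ (-r))⁻¹ := by
      field_simp at h ⊢
      linarith [h]
    rw [this, ← Real.rpow_neg h1z.le, neg_neg]
  have hsum := (term_summable r hz).hasSum
  have hts : (∑' b : ℕ, ffac r b / b.factorial * z ^ b) = (1 + z) ^ r := hFz
  rwa [hts] at hsum

/-- sum over k of `C(i+k-1, k) * c * y^k` is `c / (1-y)^i`. -/
lemma hrowgen (c : ℝ) {y : ℝ} (hy : |y| < 1) (i : ℕ) :
    HasSum (fun k : ℕ => ((i + k - 1).choose k : ℝ) * c * y ^ k) (c * (1 / (1 - y)) ^ i) := by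
  cases i with
  | zero =>
    have hz : ∀ k : ℕ, k ≠ 0 → ((0 + k - 1).choose k : ℝ) * c * y ^ k = 0 := by
      intro k hk
      have : (0 + k - 1).choose k = 0 := Nat.choose_eq_zero_of_lt (by omega)
      rw [this]
      simp
    have h := hasSum_single (f := fun k : ℕ => ((0 + k - 1).choose k : ℝ) * c * y ^ k) 0 hz
    convert h using 1
    simp
  | succ m =>
    have hnorm : ‖y‖ < 1 := by rwa [Real.norm_eq_abs]
    have hgeo := (hasSum_choose_mul_geometric_of_norm_lt_one m hnorm).mul_left c
    rw [div_pow, one_pow]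
    refine hgeo.congr_fun ?_
    · intro k
      have hch : (m + 1 + k - 1).choose k = (k + m).choose m := by
        have h := Nat.choose_symm (n := k + m) (k := k) (Nat.le_add_right k m)
        rw [show k + m - k = m by omega] at h
        rw [show m + 1 + k - 1 = k + m by omega, ← h]
      rw [hch]
      ring

set_option maxHeartbeats 2000000 in
lemma keyBall (lam a : ℝ) (hlam : 0 < lam) (ha : 0 < a) (hla : lam * a < 1) :
    HasFPowerSeriesOnBall
      (fun t : ℝ => (1 + lam * a) ^ (-(1 / lam)) * (1 + lam * a / (1 - t)) ^ (1 / lam))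
      (FormalMultilinearSeries.ofScalars ℝ (fun k => (1 + lam * a) ^ (-(1 / lam)) *
        ∑' i : ℕ, ((i + k - 1).choose k : ℝ) * dffac lam 1 i * a ^ i / i.factorial))
      0 (ENNReal.ofReal ((1 - lam * a) / 4)) := by
  set r : ℝ := 1 / lam with hrdef
  set la : ℝ := lam * a with hladef
  have hla0 : 0 < la := mul_pos hlam ha
  set C0 : ℝ := (1 + la) ^ (-r) with hC0def
  set e : ℕ → ℝ := fun k => ∑' i : ℕ, ((i + k - 1).choose k : ℝ) * dffac lam 1 i * a ^ i / i.factorial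
    with hedef
  have hd : ∀ i : ℕ, dffac lam 1 i * a ^ i = ffac r i * la ^ i := by
    intro i
    have h1 : dffac lam 1 i = ffac r i * lam ^ i := by
      calc dffac lam 1 i = ∏ j ∈ Finset.range i, ((r - j) * lam) := by
            apply Finset.prod_congr rfl
            intro j _
            rw [hrdef]
            field_simp
        _ = (∏ j ∈ Finset.range i, (r - j)) * ∏ j ∈ Finset.range i, lam :=
            Finset.prod_mul_distrib
        _ = ffac r i * lam ^ i := by rw [ffac, Finset.prod_const, Finset.card_range]
    rw [h1, hladef, mul_pow]
    ring
  set f : ℝ → ℕ × ℕ → ℝ := fun y p =>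
    ((p.1 + p.2 - 1).choose p.2 : ℝ) * (ffac r p.1 / p.1.factorial * la ^ p.1) * y ^ p.2 with hfdef
  have hfacts : ∀ y : ℝ, |y| < (1 - la) / 2 →
      0 < 1 - y ∧ |y| < 1 ∧ |la / (1 - y)| < 1 ∧ la / (1 - |y|) < 1 ∧ 0 ≤ la / (1 - |y|) := by
    intro y hy
    have hy1 : |y| < 1 := by linarith [hla0]
    have h1 : 0 < 1 - y := by have := abs_lt.1 hy1; linarith
    have h2 : la < 1 - y := by have := abs_lt.1 hy; linarith
    have h3 : la < 1 - |y| := by linarith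
    have h4 : 0 < 1 - |y| := by linarith [abs_nonneg y]
    refine ⟨h1, hy1, ?_, ?_, by positivity⟩
    · rw [abs_div, abs_of_pos hla0, abs_of_pos h1, div_lt_one h1]; exact h2
    · rw [div_lt_one h4]; exact h3
  -- rows of f
  have hrowf : ∀ (y : ℝ), |y| < 1 → ∀ i : ℕ,
      HasSum (fun k : ℕ => f y (i, k)) (ffac r i / i.factorial * (la / (1 - y)) ^ i) := by
    intro y hy1 i
    have h := hrowgen (ffac r i / i.factorial * la ^ i) hy1 i
    have hval : ffac r i / i.factorial * la ^ i * (1 / (1 - y)) ^ i =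
        ffac r i / i.factorial * (la / (1 - y)) ^ i := by
      rw [show la / (1 - y) = la * (1 / (1 - y)) by rw [mul_one_div], mul_pow]
      ring
    rw [hval] at h
    exact h
  -- rows of |f|
  have hrowabs : ∀ (y : ℝ), |y| < 1 → ∀ i : ℕ,
      HasSum (fun k : ℕ => |f y (i, k)|)
        (|ffac r i| / i.factorial * (la / (1 - |y|)) ^ i) := by
    intro y hy1 i
    have h := hrowgen (|ffac r i| / i.factorial * la ^ i) (by rwa [abs_abs]) i
    have hval : |ffac r i| / i.factorial * la ^ i * (1 / (1 - |y|)) ^ i =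
        |ffac r i| / i.factorial * (la / (1 - |y|)) ^ i := by
      rw [show la / (1 - |y|) = la * (1 / (1 - |y|)) by rw [mul_one_div], mul_pow]
      ring
    rw [hval] at h
    apply h.congr_fun
    intro k
    rw [hfdef]
    simp only []
    rw [abs_mul, abs_mul, abs_mul, abs_div, abs_pow, abs_pow, Nat.abs_cast, Nat.abs_cast,
      abs_of_pos hla0]
  -- absolute summability of the whole family
  have habs : ∀ y : ℝ, |y| < (1 - la) / 2 → Summable (fun p : ℕ × ℕ => |f y p|) := by
    intro y hy
    obtain ⟨h1y, hy1, hzy, hz', hz'0⟩ := hfacts y hy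
    rw [summable_prod_of_nonneg (fun p => abs_nonneg _)]
    constructor
    · intro i
      exact (hrowabs y hy1 i).summable
    · apply Summable.congr (f := fun i : ℕ => |ffac r i| / i.factorial * (la / (1 - |y|)) ^ i)
      · exact summ_bound r hz'0 hz'
      · intro i
        exact (hrowabs y hy1 i).tsum_eq.symm
  have hsummf : ∀ y : ℝ, |y| < (1 - la) / 2 → Summable (f y) := by
    intro y hy
    exact (habs y hy).of_abs
  -- swapped family
  have hswapsumm : ∀ y : ℝ, |y| < (1 - la) / 2 →
      Summable (fun p : ℕ × ℕ => f y (p.2, p.1)) := by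
    intro y hy
    exact ((Equiv.prodComm ℕ ℕ).summable_iff).2 (hsummf y hy)
  -- column (fiber over k) sums
  have hcolval : ∀ y : ℝ, |y| < (1 - la) / 2 → ∀ k : ℕ,
      HasSum (fun i : ℕ => f y (i, k)) (e k * y ^ k) := by
    intro y hy k
    have hfib : Summable (fun i : ℕ => f y (i, k)) := (hswapsumm y hy).prod_factor k
    have hval : e k * y ^ k = ∑' i : ℕ, f y (i, k) := by
      rw [hedef]
      simp only []
      rw [← tsum_mul_right]
      apply tsum_congr
      intro i
      rw [hfdef]
      simp only []
      rw [mul_assoc, mul_div_assoc, hd i]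
      ring
    rw [hval]
    exact hfib.hasSum
  -- total sum of the family
  have htot : ∀ y : ℝ, |y| < (1 - la) / 2 →
      HasSum (f y) ((1 + la / (1 - y)) ^ r) := by
    intro y hy
    obtain ⟨h1y, hy1, hzy, hz', hz'0⟩ := hfacts y hy
    have hs := hsummf y hy
    have h1 : HasSum (fun i : ℕ => ffac r i / i.factorial * (la / (1 - y)) ^ i)
        (∑' p : ℕ × ℕ, f y p) := hs.hasSum.prod_fiberwise (hrowf y hy1)
    have h2 := hasSum_binomial r hzy
    have heq : (∑' p : ℕ × ℕ, f y p) = (1 + la / (1 - y)) ^ r := h1.unique h2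
    rw [← heq]
    exact hs.hasSum
  -- column sums converge to the total
  have hcolsum : ∀ y : ℝ, |y| < (1 - la) / 2 →
      HasSum (fun k : ℕ => e k * y ^ k) ((1 + la / (1 - y)) ^ r) := by
    intro y hy
    have hswap : HasSum (fun p : ℕ × ℕ => f y (p.2, p.1)) ((1 + la / (1 - y)) ^ r) :=
      ((Equiv.prodComm ℕ ℕ).hasSum_iff).2 (htot y hy)
    exact hswap.prod_fiberwise (hcolval y hy)
  -- now build the power series statement
  have hR4 : (0:ℝ) < (1 - la) / 4 := by linarith
  constructor
  · -- radius bound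
    set R2 : ℝ := (1 - la) / 4 with hR2def
    have hR2abs : |R2| < (1 - la) / 2 := by
      rw [abs_of_pos hR4]; linarith
    have habsR := habs R2 hR2abs
    have hswapabs : Summable (fun p : ℕ × ℕ => |f R2 (p.2, p.1)|) :=
      ((Equiv.prodComm ℕ ℕ).summable_iff).2 habsR
    have hcolabs : Summable (fun k : ℕ => ∑' i : ℕ, |f R2 (i, k)|) :=
      (hswapabs.hasSum.prod_fiberwise (fun k => (hswapabs.prod_factor k).hasSum)).summable
    have hsummond : Summable (fun k : ℕ =>
        ‖FormalMultilinearSeries.ofScalars ℝ (fun k => C0 * e k) k‖ * ((R2.toNNReal : ℝ)) ^ k) := by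
      have hcoe : ((R2.toNNReal : ℝ)) = R2 := Real.coe_toNNReal _ hR4.le
      rw [hcoe]
      refine Summable.of_nonneg_of_le (f := fun k => |C0| * ∑' i : ℕ, |f R2 (i, k)|)
        (fun k => mul_nonneg (norm_nonneg _) (pow_nonneg hR4.le k)) (fun k => ?_)
        (hcolabs.mul_left |C0|)
      rw [FormalMultilinearSeries.ofScalars_norm, Real.norm_eq_abs, abs_mul]
      have h1 : |e k| * R2 ^ k = |e k * R2 ^ k| := by
        rw [abs_mul, abs_pow, abs_of_pos hR4]
      have h2 : |e k * R2 ^ k| ≤ ∑' i : ℕ, |f R2 (i, k)| := by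
        rw [← (hcolval R2 hR2abs k).tsum_eq]
        have hfibs : Summable (fun i : ℕ => ‖f R2 (i, k)‖) := by
          simpa [Real.norm_eq_abs] using (hswapabs.prod_factor k)
        simpa [Real.norm_eq_abs] using norm_tsum_le_tsum_norm hfibs
      calc |C0| * |e k| * R2 ^ k = |C0| * (|e k| * R2 ^ k) := by ring
        _ = |C0| * |e k * R2 ^ k| := by rw [h1]
        _ ≤ |C0| * ∑' i : ℕ, |f R2 (i, k)| := by
            apply mul_le_mul_of_nonneg_left h2 (abs_nonneg _)
    have hrad := FormalMultilinearSeries.le_radius_of_summable _ hsummond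
    have hofr : ENNReal.ofReal R2 = (R2.toNNReal : ENNReal) := rfl
    rw [hofr]
    exact hrad
  · exact ENNReal.ofReal_pos.2 hR4
  · intro y hy
    have hy' : |y| < (1 - la) / 4 := by
      rw [EMetric.mem_ball, edist_dist, dist_zero_right, Real.norm_eq_abs] at hy
      exact (ENNReal.ofReal_lt_ofReal_iff hR4).1 hy
    have hy2 : |y| < (1 - la) / 2 := by linarith
    have hc := (hcolsum y hy2).mul_left C0
    simp only [FormalMultilinearSeries.ofScalars_apply_eq, smul_eq_mul, zero_add]
    refine hc.congr_fun ?_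
    intro k
    rw [hedef]
    ring

theorem stmt_7 (lam a : ℝ) (hlam : 0 < lam) (ha : 0 < a) (hla : lam * a < 1) (n : ℕ) :
    degPoiE lam a (fun i => ((i + n - 1).choose n : ℝ)) =
      lahBell lam a n / (n.factorial : ℝ) := by
  have hball := keyBall lam a hlam ha hla
  have h := hball.factorial_smul (1 : ℝ) n
  rw [FormalMultilinearSeries.ofScalars_apply_eq] at h
  have hlb : lahBell lam a n = iteratedFDeriv ℝ n
      (fun t : ℝ => (1 + lam * a) ^ (-(1 / lam)) * (1 + lam * a / (1 - t)) ^ (1 / lam)) 0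
      (fun _ => (1 : ℝ)) := rfl
  rw [← hlb] at h
  simp only [one_pow, smul_eq_mul, mul_one, nsmul_eq_mul] at h
  simp only [degPoiE]
  rw [← h]
  have hne : (n.factorial : ℝ) ≠ 0 := by positivity
  field_simp
end

section
/- For every λ > 0, α > 0 with λα < 1, and every integer n ≥ 0, the degenerate Lah-Bell polynomial satisfies B^L_{n,λ}(α) = Σ_{k=0}^n B_{k,λ}(α) |S_1(n,k)|, where B_{k,λ} is the dimorphic degenerate Bell polynomial and |S_1(n,k)| are the unsigned Stirling numbers of the first kind. -/
/-- The dimorphic degenerate Bell polynomial `B_{n,lam}(x)`. -/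
noncomputable def dimBellP (lam x : ℝ) (n : ℕ) : ℝ :=
  (1 + lam * x) ^ (-(1 / lam)) *
    ∑' k : ℕ, dffac lam 1 k * (k : ℝ) ^ n * x ^ k / (k.factorial : ℝ)

open Finset Filter
open scoped ENNReal NNReal

noncomputable def bc (z : ℝ) (j : ℕ) : ℝ := (∏ i ∈ Finset.range j, (z - i)) / (j.factorial : ℝ)

lemma rfac_succ (x : ℝ) (n : ℕ) : rfac x (n + 1) = rfac x n * (x + n) := by
  simp [rfac, Finset.prod_range_succ]

lemma rfac_succ' (x : ℝ) (n : ℕ) : rfac x (n + 1) = x * rfac (x + 1) n := by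
  rw [rfac, Finset.prod_range_succ', rfac]
  simp only [Nat.cast_zero, add_zero]
  rw [mul_comm]
  congr 1
  exact Finset.prod_congr rfl fun i _ => by push_cast; ring

lemma rfac_zero (x : ℝ) : rfac x 0 = 1 := by simp [rfac]

lemma rfac_cast_nonneg (j n : ℕ) : 0 ≤ rfac (j : ℝ) n :=
  Finset.prod_nonneg fun i _ => by positivity

lemma bc_zero (z : ℝ) : bc z 0 = 1 := by simp [bc]

lemma bc_succ (z : ℝ) (j : ℕ) : bc z (j + 1) * (j + 1) = bc z j * (z - j) := by
  have h1 : ((j + 1).factorial : ℝ) = (j + 1) * j.factorial := by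
    push_cast [Nat.factorial_succ]; ring
  have h2 : (j.factorial : ℝ) ≠ 0 := Nat.cast_ne_zero.2 j.factorial_ne_zero
  have h3 : ((j : ℝ) + 1) ≠ 0 := by positivity
  rw [bc, bc, Finset.prod_range_succ, h1]
  field_simp

lemma pow_le_rfac (j k : ℕ) : (j : ℝ) ^ k ≤ rfac (j : ℝ) k := by
  have h : (j : ℝ) ^ k = ∏ _i ∈ Finset.range k, (j : ℝ) := by
    rw [Finset.prod_const, Finset.card_range]
  rw [h, rfac]
  exact Finset.prod_le_prod (fun i _ => by positivity) (fun i _ => by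
    have : (0:ℝ) ≤ i := Nat.cast_nonneg i
    linarith)

/-- Master ratio-test summability lemma. -/
lemma summable_M (z : ℝ) {s : ℝ} (hs0 : 0 ≤ s) (hs1 : s < 1) (n : ℕ) :
    Summable (fun j : ℕ => |bc z j| * s ^ j * rfac (j : ℝ) n) := by
  set x : ℝ := (1 + s) / 2 with hxdef
  have hx1 : x < 1 := by rw [hxdef]; linarith
  have hxs : s < x := by rw [hxdef]; linarith
  apply summable_of_ratio_norm_eventually_le hx1
  obtain ⟨N, hN⟩ := exists_nat_ge ((s * (|z| + n) + s * |z| * n) / (x - s))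
  filter_upwards [eventually_ge_atTop (max N 1)] with j hj
  have hj1 : 1 ≤ j := le_trans (le_max_right _ _) hj
  have hjN : (N : ℝ) ≤ j := by exact_mod_cast le_trans (le_max_left _ _) hj
  have hjR : (1 : ℝ) ≤ j := by exact_mod_cast hj1
  have hrf1 : 0 ≤ rfac (j : ℝ) n := rfac_cast_nonneg j n
  have hrf2 : 0 ≤ rfac ((j : ℝ) + 1) n := by
    have := rfac_cast_nonneg (j + 1) n; push_cast at this; exact this
  have hb1 : 0 ≤ |bc z j| := abs_nonneg _
  have key1 : |bc z (j + 1)| * ((j : ℝ) + 1) = |bc z j| * |z - j| := by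
    have h := bc_succ z j
    have := congrArg abs h
    rwa [abs_mul, abs_mul, abs_of_nonneg (by positivity : (0:ℝ) ≤ (j:ℝ) + 1)] at this
  have key2 : rfac ((j : ℝ) + 1) n * j = rfac (j : ℝ) n * ((j : ℝ) + n) := by
    have a1 := rfac_succ' (j : ℝ) n
    have a2 := rfac_succ (j : ℝ) n
    rw [a2] at a1
    linarith [a1]
  have quad : (|z| + j) * s * ((j : ℝ) + n) ≤ x * ((j : ℝ) * ((j : ℝ) + 1)) := by
    have hz0 : 0 ≤ |z| := abs_nonneg z
    have hn0 : (0 : ℝ) ≤ n := Nat.cast_nonneg n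
    have hNe : s * (|z| + n) + s * |z| * n ≤ (N : ℝ) * (x - s) := by
      have := (div_le_iff₀ (by linarith : (0:ℝ) < x - s)).mp hN
      linarith
    nlinarith [mul_nonneg hs0 hz0, mul_nonneg (mul_nonneg hs0 hz0) hn0,
      mul_le_mul_of_nonneg_left hjN (le_of_lt (by linarith : (0:ℝ) < x - s)),
      mul_nonneg hs0 hn0]
  have habs : |z - (j : ℝ)| ≤ |z| + j := by
    calc |z - (j:ℝ)| ≤ |z| + |(j:ℝ)| := abs_sub _ _
    _ = |z| + j := by rw [abs_of_nonneg (by positivity : (0:ℝ) ≤ (j:ℝ))]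
  have nn1 : 0 ≤ |bc z (j + 1)| * s ^ (j + 1) * rfac ((j + 1 : ℕ) : ℝ) n :=
    mul_nonneg (mul_nonneg (abs_nonneg _) (pow_nonneg hs0 _)) (rfac_cast_nonneg _ _)
  have nn2 : 0 ≤ |bc z j| * s ^ j * rfac (j : ℝ) n :=
    mul_nonneg (mul_nonneg (abs_nonneg _) (pow_nonneg hs0 _)) (rfac_cast_nonneg _ _)
  rw [Real.norm_eq_abs, Real.norm_eq_abs, abs_of_nonneg nn1, abs_of_nonneg nn2]
  have hjpos : (0 : ℝ) < (j : ℝ) * ((j : ℝ) + 1) := by positivity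
  rw [← mul_le_mul_iff_of_pos_right hjpos]
  have e1 : |bc z (j + 1)| * s ^ (j + 1) * rfac (↑(j + 1) : ℝ) n * ((j : ℝ) * ((j : ℝ) + 1)) =
      |bc z j| * s ^ j * rfac (j : ℝ) n * (|z - j| * s * ((j : ℝ) + n)) := by
    push_cast
    have hp : s ^ (j + 1) = s ^ j * s := pow_succ s j
    rw [hp]
    linear_combination (s ^ j * s * (rfac ((j:ℝ) + 1) n * (j:ℝ))) * key1 +
      (s ^ j * s * (|bc z j| * |z - (j:ℝ)|)) * key2
  rw [e1]
  have e2 : |z - (j:ℝ)| * s * ((j : ℝ) + n) ≤ x * ((j : ℝ) * ((j : ℝ) + 1)) := by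
    refine le_trans ?_ quad
    have : |z - (j:ℝ)| * s ≤ (|z| + j) * s := mul_le_mul_of_nonneg_right habs hs0
    exact mul_le_mul_of_nonneg_right this (by positivity)
  calc |bc z j| * s ^ j * rfac (j : ℝ) n * (|z - (j:ℝ)| * s * ((j : ℝ) + n))
      ≤ |bc z j| * s ^ j * rfac (j : ℝ) n * (x * ((j : ℝ) * ((j : ℝ) + 1))) :=
        mul_le_mul_of_nonneg_left e2 (by positivity)
    _ = x * (|bc z j| * s ^ j * rfac (j : ℝ) n) * ((j : ℝ) * ((j : ℝ) + 1)) := by ring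

lemma summable_bc {z t : ℝ} (ht : |t| < 1) : Summable (fun j : ℕ => bc z j * t ^ j) := by
  apply Summable.of_abs
  apply Summable.congr (summable_M z (abs_nonneg t) ht 0)
  intro j
  rw [rfac_zero, mul_one, abs_mul, abs_pow]

lemma summable_bc_deriv {z ρ : ℝ} (hρ0 : 0 < ρ) (hρ1 : ρ < 1) :
    Summable (fun j : ℕ => |bc z j| * ρ ^ (j - 1) * (j : ℝ)) := by
  refine Summable.of_nonneg_of_le (fun j => by positivity) (fun j => ?_)
    ((summable_M z hρ0.le hρ1 1).mul_left ρ⁻¹)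
  · cases j with
    | zero => simp [rfac]
    | succ m =>
      have h1 : rfac ((m + 1 : ℕ) : ℝ) 1 = (m + 1 : ℕ) := by simp [rfac]
      rw [h1]
      have h2 : (m + 1 : ℕ) - 1 = m := rfl
      rw [h2]
      have : ρ ^ m = ρ⁻¹ * ρ ^ (m + 1) := by
        field_simp [pow_succ]
        ring
      rw [this]
      ring_nf
      exact le_refl _

lemma hasDerivAt_bcsum (z : ℝ) {t : ℝ} (ht : |t| < 1) :
    HasDerivAt (fun w : ℝ => ∑' j : ℕ, bc z j * w ^ j)
      (∑' j : ℕ, bc z j * ((j : ℝ) * t ^ (j - 1))) t := by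
  set ρ : ℝ := (1 + |t|) / 2 with hρdef
  have hρt : |t| < ρ := by rw [hρdef]; have := abs_nonneg t; linarith
  have hρ0 : 0 < ρ := lt_of_le_of_lt (abs_nonneg t) hρt
  have hρ1 : ρ < 1 := by rw [hρdef]; linarith
  apply hasDerivAt_tsum_of_isPreconnected
    (u := fun j => |bc z j| * ρ ^ (j - 1) * (j : ℝ))
    (summable_bc_deriv hρ0 hρ1) (isOpen_Ioo (a := -ρ) (b := ρ))
    ((convex_Ioo _ _).isPreconnected)
    (fun j w _ => (hasDerivAt_pow j w).const_mul (bc z j))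
    ?_ (Set.mem_Ioo.2 ⟨by linarith, hρ0⟩) ?_ (abs_lt.1 hρt |> fun h => Set.mem_Ioo.2 h)
  · intro j w hw
    rw [Real.norm_eq_abs, abs_mul, abs_mul]
    have hwρ : |w| ≤ ρ := by
      rw [abs_le]; rcases Set.mem_Ioo.1 hw with ⟨h1, h2⟩; exact ⟨h1.le, h2.le⟩
    have h1 : |(j : ℝ)| = (j : ℝ) := abs_of_nonneg (Nat.cast_nonneg j)
    have h2 : |w ^ (j - 1)| ≤ ρ ^ (j - 1) := by
      rw [abs_pow]; exact pow_le_pow_left₀ (abs_nonneg w) hwρ _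
    calc |bc z j| * (|(j:ℝ)| * |w ^ (j-1)|) ≤ |bc z j| * ((j:ℝ) * ρ ^ (j-1)) := by
          rw [h1]; exact mul_le_mul_of_nonneg_left
            (mul_le_mul_of_nonneg_left h2 (Nat.cast_nonneg j)) (abs_nonneg _)
      _ = |bc z j| * ρ ^ (j - 1) * (j : ℝ) := by ring
  · exact summable_bc (by simpa using zero_lt_one)

lemma bcsum_ode (z : ℝ) {t : ℝ} (ht : |t| < 1) :
    (1 + t) * (∑' j : ℕ, bc z j * ((j : ℝ) * t ^ (j - 1))) =
      z * ∑' j : ℕ, bc z j * t ^ j := by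
  set ρ : ℝ := (1 + |t|) / 2 with hρdef
  have hρt : |t| < ρ := by rw [hρdef]; have := abs_nonneg t; linarith
  have hρ0 : 0 < ρ := lt_of_le_of_lt (abs_nonneg t) hρt
  have hρ1 : ρ < 1 := by rw [hρdef]; linarith
  have hS : Summable (fun j : ℕ => bc z j * ((j : ℝ) * t ^ (j - 1))) := by
    apply Summable.of_norm
    refine Summable.of_nonneg_of_le (fun j => norm_nonneg _) (fun j => ?_)
      (summable_bc_deriv (z := z) hρ0 hρ1)
    rw [Real.norm_eq_abs, abs_mul, abs_mul, abs_pow]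
    have h1 : |(j : ℝ)| = (j : ℝ) := abs_of_nonneg (Nat.cast_nonneg j)
    have h2 : |t| ^ (j - 1) ≤ ρ ^ (j - 1) := pow_le_pow_left₀ (abs_nonneg t) hρt.le _
    calc |bc z j| * (|(j:ℝ)| * |t| ^ (j-1)) ≤ |bc z j| * ((j:ℝ) * ρ ^ (j-1)) := by
          rw [h1]; exact mul_le_mul_of_nonneg_left
            (mul_le_mul_of_nonneg_left h2 (Nat.cast_nonneg j)) (abs_nonneg _)
      _ = |bc z j| * ρ ^ (j - 1) * (j : ℝ) := by ring
  have hS2 : Summable (fun j : ℕ => bc z j * (j : ℝ) * t ^ j) := by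
    apply Summable.congr (hS.mul_right t)
    intro j
    cases j with
    | zero => simp
    | succ m =>
      have : (m + 1 : ℕ) - 1 = m := rfl
      rw [this, pow_succ]
      push_cast
      ring
  have hS1 : Summable (fun j : ℕ => bc z (j + 1) * (((j : ℝ) + 1) * t ^ j)) := by
    have := (summable_nat_add_iff 1).2 hS
    apply Summable.congr this
    intro j
    have : (j + 1 : ℕ) - 1 = j := rfl
    rw [this]
    push_cast
    ring
  -- shift the derivative sum
  have hshift : (∑' j : ℕ, bc z j * ((j : ℝ) * t ^ (j - 1))) =
      ∑' j : ℕ, bc z (j + 1) * (((j : ℝ) + 1) * t ^ j) := by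
    rw [Summable.tsum_eq_zero_add hS]
    simp only [Nat.cast_zero, zero_mul, mul_zero, zero_add]
    apply tsum_congr
    intro j
    have : (j + 1 : ℕ) - 1 = j := rfl
    rw [this]
    push_cast
    ring
  have htS : t * (∑' j : ℕ, bc z j * ((j : ℝ) * t ^ (j - 1))) =
      ∑' j : ℕ, bc z j * (j : ℝ) * t ^ j := by
    rw [← hS.tsum_mul_left t]
    apply tsum_congr
    intro j
    cases j with
    | zero => simp
    | succ m =>
      have : (m + 1 : ℕ) - 1 = m := rfl
      rw [this]
      push_cast
      rw [pow_succ]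
      ring
  rw [add_mul, one_mul]
  nth_rewrite 1 [hshift]
  rw [htS, ← Summable.tsum_add hS1 hS2]
  rw [← (summable_bc ht).tsum_mul_left z]
  apply tsum_congr
  intro j
  have hb := bc_succ z j
  have : bc z (j+1) * (((j:ℝ)+1) * t ^ j) + bc z j * (j:ℝ) * t ^ j
      = (bc z (j+1) * ((j:ℝ)+1) + bc z j * (j:ℝ)) * t ^ j := by ring
  rw [this, hb]
  ring

theorem binomial_hasSum (z : ℝ) {y : ℝ} (hy : |y| < 1) :
    HasSum (fun j : ℕ => bc z j * y ^ j) ((1 + y) ^ z) := by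
  set g : ℝ → ℝ := fun t => ∑' j : ℕ, bc z j * t ^ j with hgdef
  have hconst : ∀ t : ℝ, |t| < 1 → g t * (1 + t) ^ (-z) = 1 := by
    intro t ht
    set h : ℝ → ℝ := fun w => g w * (1 + w) ^ (-z) with hhdef
    have hderiv : ∀ w : ℝ, |w| < 1 → HasDerivAt h 0 w := by
      intro w hw
      have hw1 : 0 < 1 + w := by rcases abs_lt.1 hw with ⟨h1, _⟩; linarith
      have hg' := hasDerivAt_bcsum z hw
      have hp : HasDerivAt (fun v : ℝ => (1 + v) ^ (-z))
          (-z * (1 + w) ^ (-z - 1)) w := by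
        have hid : HasDerivAt (fun v : ℝ => 1 + v) 1 w := by
          simpa using (hasDerivAt_id w).const_add 1
        have := hid.rpow_const (p := -z) (Or.inl hw1.ne')
        convert this using 1
        ring
      have H := hg'.mul hp
      have hode := bcsum_ode z hw
      have hsplit : (1 + w) ^ (-z) = (1 + w) ^ (-z - 1) * (1 + w) := by
        have h2 := Real.rpow_add hw1 (-z - 1) 1
        rw [Real.rpow_one] at h2
        rw [← h2]
        norm_num
      have hval : (∑' j : ℕ, bc z j * ((j : ℝ) * w ^ (j - 1))) * (1 + w) ^ (-z) +
          (∑' j : ℕ, bc z j * w ^ j) * (-z * (1 + w) ^ (-z - 1)) = 0 := by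
        rw [hsplit]
        have hx : (∑' j : ℕ, bc z j * ((j : ℝ) * w ^ (j - 1))) * ((1 + w) ^ (-z - 1) * (1 + w))
            = ((1 + w) * (∑' j : ℕ, bc z j * ((j : ℝ) * w ^ (j - 1)))) * (1 + w) ^ (-z - 1) := by
          ring
        rw [hx, hode]
        ring
      rw [hval] at H
      exact H
    rcases le_or_gt 0 t with h0 | h0
    · have := constant_of_has_deriv_right_zero (f := h) (a := 0) (b := t)
        (fun w hw => (hderiv w (by
          rcases Set.mem_Icc.1 hw with ⟨h1, h2⟩
          rw [abs_lt]; constructor <;> nlinarith [abs_lt.1 ht])).continuousAt.continuousWithinAt)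
        (fun w hw => (hderiv w (by
          rcases Set.mem_Ico.1 hw with ⟨h1, h2⟩
          rw [abs_lt]; constructor <;> nlinarith [abs_lt.1 ht])).hasDerivWithinAt)
        t (Set.mem_Icc.2 ⟨h0, le_refl t⟩)
      rw [hhdef] at this
      simp only at this
      rw [this]
      have : g 0 = 1 := by
        rw [hgdef]
        simp only
        rw [tsum_eq_single 0 (fun j hj => by
          rw [zero_pow hj, mul_zero])]
        simp [bc_zero]
      rw [this, add_zero, Real.one_rpow, mul_one]
    · have := constant_of_has_deriv_right_zero (f := h) (a := t) (b := 0)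
        (fun w hw => (hderiv w (by
          rcases Set.mem_Icc.1 hw with ⟨h1, h2⟩
          rw [abs_lt]; constructor <;> nlinarith [abs_lt.1 ht])).continuousAt.continuousWithinAt)
        (fun w hw => (hderiv w (by
          rcases Set.mem_Ico.1 hw with ⟨h1, h2⟩
          rw [abs_lt]; constructor <;> nlinarith [abs_lt.1 ht])).hasDerivWithinAt)
        0 (Set.mem_Icc.2 ⟨h0.le, le_refl 0⟩)
      rw [hhdef] at this
      simp only at this
      rw [← this]
      have : g 0 = 1 := by
        rw [hgdef]
        simp only
        rw [tsum_eq_single 0 (fun j hj => by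
          rw [zero_pow hj, mul_zero])]
        simp [bc_zero]
      rw [this, add_zero, Real.one_rpow, mul_one]
  have hy1 : 0 < 1 + y := by rcases abs_lt.1 hy with ⟨h1, _⟩; linarith
  have h1 := hconst y hy
  have hgy : g y = (1 + y) ^ z := by
    have h2 : (1 + y) ^ (-z) * (1 + y) ^ z = 1 := by
      rw [← Real.rpow_add hy1]
      norm_num
    calc g y = g y * ((1 + y) ^ (-z) * (1 + y) ^ z) := by rw [h2, mul_one]
      _ = (g y * (1 + y) ^ (-z)) * (1 + y) ^ z := by ring
      _ = (1 + y) ^ z := by rw [h1, one_mul]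
  have := (summable_bc (z := z) hy).hasSum
  rwa [show (∑' j : ℕ, bc z j * y ^ j) = (1+y) ^ z from hgy] at this

lemma neg_binomial_hasSum (j : ℕ) {t : ℝ} (ht : |t| < 1) :
    HasSum (fun n : ℕ => rfac (j : ℝ) n / n.factorial * t ^ n) ((1 - t) ^ (-(j : ℝ))) := by
  have H := binomial_hasSum (-(j : ℝ)) (y := -t) (by rwa [abs_neg])
  have heq : (fun n : ℕ => bc (-(j : ℝ)) n * (-t) ^ n) =
      fun n : ℕ => rfac (j : ℝ) n / n.factorial * t ^ n := by
    funext m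
    have hp : ∏ i ∈ Finset.range m, (-(j : ℝ) - i) = (-1) ^ m * rfac (j : ℝ) m := by
      have h1 : ∀ i ∈ Finset.range m, -(j : ℝ) - i = (-1) * ((j : ℝ) + i) :=
        fun i _ => by ring
      rw [Finset.prod_congr rfl h1, Finset.prod_mul_distrib, Finset.prod_const,
        Finset.card_range, rfac]
    have hone : ((-1 : ℝ) ^ m) * ((-1 : ℝ) ^ m) = 1 := by
      rw [← mul_pow]; norm_num
    have hnt : (-t) ^ m = (-1 : ℝ) ^ m * t ^ m := by rw [neg_pow]
    rw [bc, hp, hnt]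
    calc (-1 : ℝ) ^ m * rfac (j : ℝ) m / m.factorial * ((-1) ^ m * t ^ m)
        = (((-1 : ℝ) ^ m) * ((-1 : ℝ) ^ m)) * (rfac (j : ℝ) m / m.factorial * t ^ m) := by ring
      _ = rfac (j : ℝ) m / m.factorial * t ^ m := by rw [hone, one_mul]
  rw [heq] at H
  have : (1 : ℝ) + -t = 1 - t := by ring
  rwa [this] at H

lemma dffac_eq {lam : ℝ} (hlam : 0 < lam) (j : ℕ) :
    dffac lam 1 j = lam ^ j * ∏ i ∈ Finset.range j, (1 / lam - i) := by
  rw [dffac]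
  have h1 : ∀ i ∈ Finset.range j, (1 : ℝ) - i * lam = lam * (1 / lam - i) := fun i _ => by
    field_simp
  rw [Finset.prod_congr rfl h1, Finset.prod_mul_distrib, Finset.prod_const, Finset.card_range]

lemma dffac_binomial_hasSum {lam : ℝ} (hlam : 0 < lam) {w : ℝ} (hw : |lam * w| < 1) :
    HasSum (fun j : ℕ => dffac lam 1 j * w ^ j / j.factorial) ((1 + lam * w) ^ (1 / lam)) := by
  have H := binomial_hasSum (1 / lam) (y := lam * w) hw
  have heq : (fun j : ℕ => bc (1 / lam) j * (lam * w) ^ j) =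
      fun j : ℕ => dffac lam 1 j * w ^ j / j.factorial := by
    funext m
    rw [bc, dffac_eq hlam, mul_pow]
    ring
  rwa [heq] at H

lemma abs_dffac_eq {lam : ℝ} (hlam : 0 < lam) (j : ℕ) :
    |dffac lam 1 j| = lam ^ j * |∏ i ∈ Finset.range j, (1 / lam - i)| := by
  rw [dffac_eq hlam, abs_mul, abs_pow, abs_of_pos hlam]

lemma summable_main {lam : ℝ} (hlam : 0 < lam) {v : ℝ} (hv0 : 0 ≤ v) (hv : lam * v < 1)
    (n : ℕ) :
    Summable (fun j : ℕ => |dffac lam 1 j| / j.factorial * v ^ j * rfac (j : ℝ) n) := by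
  refine Summable.congr (summable_M (1 / lam) (s := lam * v)
    (mul_nonneg hlam.le hv0) hv n) (fun j => ?_)
  rw [bc, abs_div, Nat.abs_cast, abs_dffac_eq hlam, mul_pow]
  ring

set_option maxHeartbeats 1000000 in
theorem stmt_9 (lam a : ℝ) (hlam : 0 < lam) (ha : 0 < a) (hla : lam * a < 1)
    (c : ℕ → ℕ → ℝ)
    (hc : ∀ (n : ℕ) (x : ℝ),
      rfac x n = ∑ k ∈ Finset.range (n + 1), c n k * x ^ k)
    (n : ℕ) :
    lahBell lam a n = ∑ k ∈ Finset.range (n + 1), dimBellP lam a k * c n k := by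
  have hla0 : 0 < lam * a := mul_pos hlam ha
  set f : ℝ → ℝ :=
    fun t : ℝ => (1 + lam * a) ^ (-(1 / lam)) * (1 + lam * a / (1 - t)) ^ (1 / lam) with hfdef
  set C : ℝ := (1 + lam * a) ^ (-(1 / lam)) with hCdef
  have hCpos : 0 < C := Real.rpow_pos_of_pos (by linarith) _
  set r : ℝ := (1 - lam * a) / 2 with hrdef
  have hr0 : 0 < r := by rw [hrdef]; linarith
  have hr1 : r < 1 := by rw [hrdef]; linarith
  have hra : lam * a < 1 - r := by rw [hrdef]; linarith
  set b : ℕ → ℝ := fun j => C * (dffac lam 1 j * a ^ j / j.factorial) with hbdef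
  have habsb : ∀ j, |b j| = C * (|dffac lam 1 j| * a ^ j / j.factorial) := by
    intro j
    rw [hbdef]
    simp only
    rw [abs_mul, abs_of_pos hCpos, abs_div, abs_mul, abs_pow, abs_of_pos ha, Nat.abs_cast]
  set q : ℕ → ℝ := fun m => (∑' j : ℕ, b j * rfac (j : ℝ) m) / m.factorial with hqdef
  -- summability of |b j| * rfac j m
  have Sb : ∀ m : ℕ, Summable (fun j : ℕ => |b j| * rfac (j : ℝ) m) := by
    intro m
    refine Summable.congr ((summable_main hlam ha.le hla m).mul_left C) (fun j => ?_)
    rw [habsb]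
    ring
  have Sbabs : ∀ m : ℕ, Summable (fun j : ℕ => |b j * rfac (j : ℝ) m|) := by
    intro m
    refine (Sb m).congr (fun j => ?_)
    rw [abs_mul (b j) (rfac (j : ℝ) m), abs_of_nonneg (rfac_cast_nonneg j m)]
  -- product summability
  have Sprod : ∀ t : ℝ, |t| < 1 → lam * a < 1 - |t| →
      Summable (fun p : ℕ × ℕ =>
        |b p.2| * (rfac ((p.2 : ℕ) : ℝ) p.1 / p.1.factorial * |t| ^ p.1)) := by
    intro t ht hta
    have h1t : 0 < 1 - |t| := by linarith [abs_nonneg t]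
    have hrow : ∀ j : ℕ, HasSum (fun m : ℕ => rfac (j : ℝ) m / m.factorial * |t| ^ m)
        ((1 - |t|) ^ (-(j : ℝ))) := fun j => neg_binomial_hasSum j (by rwa [abs_abs])
    have hnnJ : (0 : (ℕ × ℕ) → ℝ) ≤ fun p : ℕ × ℕ =>
        |b p.1| * (rfac ((p.1 : ℕ) : ℝ) p.2 / p.2.factorial * |t| ^ p.2) := by
      intro p
      exact mul_nonneg (abs_nonneg _) (mul_nonneg
        (div_nonneg (rfac_cast_nonneg _ _) (Nat.cast_nonneg _)) (pow_nonneg (abs_nonneg t) _))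
    have SJ : Summable (fun p : ℕ × ℕ =>
        |b p.1| * (rfac ((p.1 : ℕ) : ℝ) p.2 / p.2.factorial * |t| ^ p.2)) := by
      refine (summable_prod_of_nonneg hnnJ).mpr ⟨fun j => Summable.mul_left (|b j|) (hrow j).summable, ?_⟩
      have hcf : ∀ j : ℕ,
          |b j| * (1 - |t|) ^ (-(j : ℝ)) =
            ∑' m : ℕ, |b j| * (rfac (j : ℝ) m / m.factorial * |t| ^ m) := by
        intro j
        rw [tsum_mul_left, (hrow j).tsum_eq]
      refine Summable.congr ?_ (fun j => hcf j)
      clear hcf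
      have hpow : ∀ j : ℕ, (1 - |t|) ^ (-(j : ℝ)) = ((1 - |t|)⁻¹) ^ j := by
        intro j
        rw [Real.rpow_neg h1t.le, Real.rpow_natCast, inv_pow]
      have hlv : lam * (a * (1 - |t|)⁻¹) < 1 := by
        rw [← mul_assoc, ← div_eq_mul_inv]
        exact (div_lt_one h1t).mpr hta
      refine Summable.congr ((summable_main hlam (v := a * (1 - |t|)⁻¹)
        (by positivity) hlv 0).mul_left C) (fun j => ?_)
      rw [habsb, hpow, rfac_zero, mul_pow, mul_one]
      ring
    exact SJ.prod_symm.congr (fun p => rfl)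
  -- column sums summable
  have Scol : ∀ t : ℝ, |t| < 1 → lam * a < 1 - |t| →
      Summable (fun m : ℕ => ∑' j : ℕ,
        |b j| * (rfac (j : ℝ) m / m.factorial * |t| ^ m)) := by
    intro t ht hta
    have hnn : (0 : (ℕ × ℕ) → ℝ) ≤ fun p : ℕ × ℕ =>
        |b p.2| * (rfac ((p.2 : ℕ) : ℝ) p.1 / p.1.factorial * |t| ^ p.1) := by
      intro p
      exact mul_nonneg (abs_nonneg _) (mul_nonneg
        (div_nonneg (rfac_cast_nonneg _ _) (Nat.cast_nonneg _)) (pow_nonneg (abs_nonneg t) _))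
    exact ((summable_prod_of_nonneg hnn).mp (Sprod t ht hta)).2
  -- |q m| bound
  have hqle : ∀ m : ℕ, ∀ t : ℝ, 0 ≤ t →
      |q m| * t ^ m ≤ ∑' j : ℕ, |b j| * (rfac (j : ℝ) m / m.factorial * t ^ m) := by
    intro m t ht
    have h1 : |∑' j : ℕ, b j * rfac (j : ℝ) m| ≤ ∑' j : ℕ, |b j| * rfac (j : ℝ) m := by
      calc |∑' j : ℕ, b j * rfac (j : ℝ) m| = ‖∑' j : ℕ, b j * rfac (j : ℝ) m‖ :=
            (Real.norm_eq_abs _).symm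
        _ ≤ ∑' j : ℕ, ‖b j * rfac (j : ℝ) m‖ := by
            refine norm_tsum_le_tsum_norm ?_
            refine (Sbabs m).congr (fun j => ?_)
            rw [Real.norm_eq_abs]
        _ = ∑' j : ℕ, |b j| * rfac (j : ℝ) m := by
            refine tsum_congr (fun j => ?_)
            rw [Real.norm_eq_abs, abs_mul (b j) (rfac (j : ℝ) m),
              abs_of_nonneg (rfac_cast_nonneg j m)]
    have h2 : (∑' j : ℕ, |b j| * rfac (j : ℝ) m) / m.factorial * t ^ m =
        ∑' j : ℕ, |b j| * (rfac (j : ℝ) m / m.factorial * t ^ m) := by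
      rw [div_mul_eq_mul_div, ← tsum_mul_right, ← tsum_div_const]
      exact tsum_congr fun j => by ring
    rw [hqdef]
    simp only
    rw [← h2, abs_div, Nat.abs_cast]
    have hfac : (0:ℝ) < (m.factorial : ℝ) := by positivity
    exact mul_le_mul_of_nonneg_right ((div_le_div_iff_of_pos_right hfac).mpr h1) (pow_nonneg ht m)
  -- the power series
  have key : HasFPowerSeriesOnBall f (FormalMultilinearSeries.ofScalars ℝ q) 0
      (ENNReal.ofReal r) := by
    refine ⟨?_, ENNReal.ofReal_pos.mpr hr0, ?_⟩
    · have hrr : ((r.toNNReal : ℝ≥0) : ℝ) = r := Real.coe_toNNReal r hr0.le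
      have habs_r : |r| = r := abs_of_pos hr0
      have hcol := Scol r (by rwa [habs_r]) (by rwa [habs_r])
      rw [habs_r] at hcol
      have hsum : Summable (fun m : ℕ =>
          ‖FormalMultilinearSeries.ofScalars ℝ q m‖ * (r.toNNReal : ℝ) ^ m) := by
        refine Summable.of_nonneg_of_le (fun m => by positivity) (fun m => ?_) hcol
        rw [FormalMultilinearSeries.ofScalars_norm, hrr, Real.norm_eq_abs]
        exact hqle m r hr0.le
      have := FormalMultilinearSeries.le_radius_of_summable_norm _ hsum
      rwa [show ((r.toNNReal : ℝ≥0) : ℝ≥0∞) = ENNReal.ofReal r from rfl] at this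
    · intro y hy
      have hy' : |y| < r := by
        rw [EMetric.mem_ball, edist_dist, Real.dist_eq, sub_zero] at hy
        exact (ENNReal.ofReal_lt_ofReal_iff hr0).mp hy
      have hy1 : |y| < 1 := hy'.trans hr1
      have hray : lam * a < 1 - |y| := by linarith
      have h1y : 0 < 1 - y := by
        rcases abs_lt.1 hy1 with ⟨hl, hu⟩
        linarith
      have h1y' : lam * a < 1 - y := by
        rcases abs_lt.1 hy' with ⟨hl, hu⟩
        linarith
      rw [zero_add]
      simp only [FormalMultilinearSeries.ofScalars_apply_eq, smul_eq_mul]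
      have hsummQ : Summable (fun m : ℕ => q m * y ^ m) := by
        refine Summable.of_norm (Summable.of_nonneg_of_le (fun m => norm_nonneg _)
          (fun m => ?_) (Scol y hy1 hray))
        rw [Real.norm_eq_abs, abs_mul, abs_pow]
        exact hqle m |y| (abs_nonneg y)
      have hrown : ∀ m : ℕ, Summable (fun j : ℕ =>
          b j * (rfac (j : ℝ) m / m.factorial * y ^ m)) := by
        intro m
        have h0 : Summable (fun j : ℕ => b j * rfac (j : ℝ) m) := Summable.of_abs (Sbabs m)
        refine (h0.mul_right (y ^ m / m.factorial)).congr (fun j => ?_)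
        ring
      have hcoln : ∀ j : ℕ, Summable (fun m : ℕ =>
          b j * (rfac (j : ℝ) m / m.factorial * y ^ m)) :=
        fun j => ((neg_binomial_hasSum j hy1).summable.mul_left (b j))
      have hFabs : Summable (fun p : ℕ × ℕ =>
          |b p.2 * (rfac ((p.2 : ℕ) : ℝ) p.1 / p.1.factorial * y ^ p.1)|) := by
        refine (Sprod y hy1 hray).congr (fun p => ?_)
        have h3 : |rfac ((p.2 : ℕ) : ℝ) p.1 / p.1.factorial * y ^ p.1| =
            rfac ((p.2 : ℕ) : ℝ) p.1 / p.1.factorial * |y| ^ p.1 := by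
          rw [abs_mul, abs_pow, abs_div, Nat.abs_cast,
            abs_of_nonneg (rfac_cast_nonneg _ _)]
        rw [abs_mul (b p.2) (rfac ((p.2 : ℕ) : ℝ) p.1 / p.1.factorial * y ^ p.1), h3]
      have hF : Summable (fun p : ℕ × ℕ =>
          b p.2 * (rfac ((p.2 : ℕ) : ℝ) p.1 / p.1.factorial * y ^ p.1)) :=
        Summable.of_abs hFabs
      have hpowy : ∀ j : ℕ, (1 - y) ^ (-(j : ℝ)) = ((1 - y)⁻¹) ^ j := by
        intro j
        rw [Real.rpow_neg h1y.le, Real.rpow_natCast, inv_pow]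
      have hval : (∑' m : ℕ, q m * y ^ m) = f y := by
        calc (∑' m : ℕ, q m * y ^ m)
            = ∑' m : ℕ, ∑' j : ℕ, b j * (rfac (j : ℝ) m / m.factorial * y ^ m) := by
              refine tsum_congr (fun m => ?_)
              rw [hqdef]
              simp only
              rw [div_mul_eq_mul_div, ← tsum_mul_right, ← tsum_div_const]
              exact tsum_congr fun j => by ring
          _ = ∑' j : ℕ, ∑' m : ℕ, b j * (rfac (j : ℝ) m / m.factorial * y ^ m) :=
              (Summable.tsum_comm' (f := fun m j => b j * (rfac (j : ℝ) m / m.factorial * y ^ m))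
                hF hrown hcoln).symm
          _ = ∑' j : ℕ, b j * (1 - y) ^ (-(j : ℝ)) := by
              refine tsum_congr (fun j => ?_)
              rw [tsum_mul_left, (neg_binomial_hasSum j hy1).tsum_eq]
          _ = C * ∑' j : ℕ, dffac lam 1 j * (a / (1 - y)) ^ j / j.factorial := by
              rw [← tsum_mul_left]
              refine tsum_congr (fun j => ?_)
              rw [hbdef]
              simp only
              rw [hpowy j, div_pow, inv_pow]
              ring
          _ = C * (1 + lam * (a / (1 - y))) ^ (1 / lam) := by
              congr 1
              refine (dffac_binomial_hasSum hlam (w := a / (1 - y)) ?_).tsum_eq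
              have hpos : 0 < lam * (a / (1 - y)) := by positivity
              rw [abs_of_pos hpos, ← mul_div_assoc]
              exact (div_lt_one h1y).mpr h1y'
          _ = f y := by
              rw [hfdef]
              simp only
              rw [mul_div_assoc]
      exact (Summable.hasSum_iff hsummQ).mpr hval
  -- extraction
  have hext := key.factorial_smul (1 : ℝ) n
  have hlhs : lahBell lam a n = (n.factorial : ℝ) * q n := by
    unfold lahBell
    rw [iteratedDeriv_eq_iteratedFDeriv]
    rw [← hCdef, ← hfdef, ← hext, FormalMultilinearSeries.ofScalars_apply_eq]
    rw [one_pow, smul_eq_mul, mul_one, nsmul_eq_mul]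
  -- the final sum manipulation
  have hsummk : ∀ k : ℕ, Summable (fun j : ℕ => b j * ((j : ℝ) ^ k)) := by
    intro k
    apply Summable.of_abs
    refine Summable.of_nonneg_of_le (fun j => abs_nonneg _) (fun j => ?_) (Sb k)
    rw [abs_mul, abs_pow, Nat.abs_cast]
    exact mul_le_mul_of_nonneg_left (pow_le_rfac j k) (abs_nonneg _)
  have hfin : (n.factorial : ℝ) * q n =
      ∑ k ∈ Finset.range (n + 1), dimBellP lam a k * c n k := by
    rw [hqdef]
    simp only
    rw [mul_comm, div_mul_cancel₀ _ (by positivity : ((n.factorial : ℝ)) ≠ 0)]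
    calc (∑' j : ℕ, b j * rfac (j : ℝ) n)
        = ∑' j : ℕ, ∑ k ∈ Finset.range (n + 1), b j * (c n k * (j : ℝ) ^ k) := by
          refine tsum_congr (fun j => ?_)
          rw [hc n (j : ℝ), Finset.mul_sum]
      _ = ∑ k ∈ Finset.range (n + 1), ∑' j : ℕ, b j * (c n k * (j : ℝ) ^ k) := by
          refine Summable.tsum_finsetSum (fun k _ => ?_)
          refine ((hsummk k).mul_left (c n k)).congr (fun j => ?_)
          ring
      _ = ∑ k ∈ Finset.range (n + 1), dimBellP lam a k * c n k := by
          refine Finset.sum_congr rfl (fun k _ => ?_)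
          have h1 : (∑' j : ℕ, b j * (c n k * (j : ℝ) ^ k)) =
              c n k * ∑' j : ℕ, b j * (j : ℝ) ^ k := by
            rw [← tsum_mul_left]
            exact tsum_congr fun j => by ring
          have h2 : (∑' j : ℕ, b j * (j : ℝ) ^ k) = dimBellP lam a k := by
            unfold dimBellP
            rw [← hCdef, ← tsum_mul_left]
            refine tsum_congr (fun j => ?_)
            rw [hbdef]
            simp only
            ring
          rw [h1, h2]
          ring
  rw [hlhs, hfin]
end
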